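/- arXiv:2403.11479 — 2 statements merged into one kernel-verified Lean document; each statement's English description precedes it below -/
import Mathlib

section
/- The function A ↦ (det A)⁻¹ is convex on the set of symmetric positive definite n×n real matrices: for all positive definite symmetric A, B and t ∈ [0,1], (det(tA + (1-t)B))⁻¹ ≤ t(det A)⁻¹ + (1-t)(det B)⁻¹. -/
open Matrix

private lemma amgm_aux {x t : ℝ} (hx : 0 ≤ x) (h0 : 0 ≤ t) (h1 : t ≤ 1) :
    x ^ (1 - t) ≤ t + (1 - t) * x := by
  have h := Real.geom_mean_le_arith_mean2_weighted h0 (by linarith : (0:ℝ) ≤ 1 - t)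
    zero_le_one hx (by ring)
  simpa using h

private lemma posdef_conj {n : ℕ} {B C : Matrix (Fin n) (Fin n) ℝ} (hB : B.PosDef)
    (hC : Function.Injective C.mulVec) : (Cᴴ * B * C).PosDef := by
  refine posDef_iff_dotProduct_mulVec.mpr ⟨isHermitian_conjTranspose_mul_mul C hB.1, fun x hx => ?_⟩
  have hCx : C *ᵥ x ≠ 0 := fun h => hx (hC (by simpa using h))
  simpa only [star_mulVec, dotProduct_mulVec, vecMul_vecMul] using hB.dotProduct_mulVec_pos hCx

private lemma core {n : ℕ} {M : Matrix (Fin n) (Fin n) ℝ} (hM : M.PosDef)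
    {t : ℝ} (h0 : 0 ≤ t) (h1 : t ≤ 1) :
    ((t • (1 : Matrix (Fin n) (Fin n) ℝ) + (1 - t) • M).det)⁻¹
      ≤ t + (1 - t) * (M.det)⁻¹ := by
  classical
  have hH := hM.isHermitian
  set U : Matrix (Fin n) (Fin n) ℝ := (hH.eigenvectorUnitary : Matrix (Fin n) (Fin n) ℝ) with hUdef
  set lam := hH.eigenvalues with hlam
  have hspec : M = U * Matrix.diagonal lam * star U := by
    have := hH.spectral_theorem
    simpa [hUdef, Function.comp] using this
  have hU1 : U * star U = 1 := (Matrix.mem_unitaryGroup_iff).mp hH.eigenvectorUnitary.2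
  have hkey : t • (1 : Matrix (Fin n) (Fin n) ℝ) + (1 - t) • M
      = U * (t • (1 : Matrix (Fin n) (Fin n) ℝ) + (1 - t) • Matrix.diagonal lam) * star U := by
    rw [Matrix.mul_add, Matrix.add_mul, Matrix.mul_smul, Matrix.mul_smul,
      Matrix.smul_mul, Matrix.smul_mul, mul_one, hU1, ← hspec]
  have hdetU : U.det * (star U).det = 1 := by
    rw [← Matrix.det_mul, hU1, Matrix.det_one]
  have hdet : (t • (1 : Matrix (Fin n) (Fin n) ℝ) + (1 - t) • M).det
      = ∏ i, (t + (1 - t) * lam i) := by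
    rw [hkey, Matrix.det_mul, Matrix.det_mul]
    rw [show U.det * (t • (1 : Matrix (Fin n) (Fin n) ℝ) + (1 - t) • Matrix.diagonal lam).det
        * (star U).det
        = (U.det * (star U).det)
          * (t • (1 : Matrix (Fin n) (Fin n) ℝ) + (1 - t) • Matrix.diagonal lam).det by ring,
      hdetU, one_mul]
    rw [show t • (1 : Matrix (Fin n) (Fin n) ℝ) + (1 - t) • Matrix.diagonal lam
        = Matrix.diagonal (fun i => t + (1 - t) * lam i) by
      ext i j
      rcases eq_or_ne i j with rfl | h
      · simp [Matrix.one_apply_eq, Matrix.diagonal_apply_eq]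
      · simp [Matrix.one_apply_ne h, Matrix.diagonal_apply_ne _ h]]
    rw [Matrix.det_diagonal]
  have hdetM : M.det = ∏ i, lam i := by
    simpa using hH.det_eq_prod_eigenvalues
  have hpos : ∀ i, 0 < lam i := hM.eigenvalues_pos
  rw [hdet, hdetM]
  have h2 : (∏ i, (t + (1 - t) * lam i))⁻¹ = ∏ i, (t + (1 - t) * lam i)⁻¹ := by
    rw [← Finset.prod_inv_distrib]
  have hposi : ∀ i, 0 < t + (1 - t) * lam i := fun i =>
    lt_of_lt_of_le (Real.rpow_pos_of_pos (hpos i) _) (amgm_aux (hpos i).le h0 h1)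
  rw [h2, ← Finset.prod_inv_distrib]
  calc ∏ i, (t + (1 - t) * lam i)⁻¹
      ≤ ∏ i, ((lam i)⁻¹) ^ (1 - t) := by
        refine Finset.prod_le_prod (fun i _ => ?_) (fun i _ => ?_)
        · exact inv_nonneg.mpr (hposi i).le
        · have h3 : (lam i) ^ (1 - t) ≤ t + (1 - t) * lam i :=
            amgm_aux (hpos i).le h0 h1
          have h4 : (0:ℝ) < (lam i) ^ (1 - t) := Real.rpow_pos_of_pos (hpos i) _
          calc (t + (1 - t) * lam i)⁻¹ ≤ ((lam i) ^ (1 - t))⁻¹ :=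
                inv_anti₀ h4 h3
            _ = ((lam i)⁻¹) ^ (1 - t) := by
                rw [← Real.inv_rpow (hpos i).le]
    _ = (∏ i, (lam i)⁻¹) ^ (1 - t) :=
        Real.finset_prod_rpow _ _ (fun i _ => inv_nonneg.mpr (hpos i).le) _
    _ ≤ t + (1 - t) * ∏ i, (lam i)⁻¹ := by
        exact amgm_aux (Finset.prod_nonneg fun i _ => inv_nonneg.mpr (hpos i).le) h0 h1

/-- A ↦ (det A)⁻¹ is convex on symmetric positive definite matrices. -/
theorem inv_det_convex (n : ℕ) (A B : Matrix (Fin n) (Fin n) ℝ)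
    (hA : A.PosDef) (hB : B.PosDef) (t : ℝ) (ht : t ∈ Set.Icc (0 : ℝ) 1) :
    ((t • A + (1 - t) • B).det)⁻¹ ≤ t * (A.det)⁻¹ + (1 - t) * (B.det)⁻¹ := by
  classical
  obtain ⟨h0, h1⟩ := ht
  rcases eq_or_lt_of_le h1 with rfl | h1'
  · simp [hA.det_pos.ne']
  open scoped MatrixOrder in set S := CFC.sqrt A with hSdef
  have hSps : S.PosSemidef := by open scoped MatrixOrder in exact (CFC.sqrt_nonneg A).posSemidef
  have hSS : S * S = A := by open scoped MatrixOrder in exact CFC.sqrt_mul_sqrt_self A hA.posSemidef.nonneg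
  have hdetS : S.det * S.det = A.det := by rw [← Matrix.det_mul, hSS]
  have hdetA : 0 < A.det := hA.det_pos
  have hdetSne : S.det ≠ 0 := by
    intro h
    rw [h, mul_zero] at hdetS
    exact hdetA.ne' hdetS.symm
  have hSunit : IsUnit S.det := hdetSne.isUnit
  have hSinv : S * S⁻¹ = 1 := Matrix.mul_nonsing_inv _ hSunit
  have hSinv' : S⁻¹ * S = 1 := Matrix.nonsing_inv_mul _ hSunit
  have hSherm : (S⁻¹)ᴴ = S⁻¹ := (hSps.1.inv).eq
  set M := S⁻¹ * B * S⁻¹ with hMdef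
  have hMpd : M.PosDef := by
    have hinj : Function.Injective (S⁻¹).mulVec := by
      intro x y hxy
      have := congrArg (S.mulVec) hxy
      simpa [Matrix.mulVec_mulVec, hSinv] using this
    have := posdef_conj hB hinj
    rwa [hSherm] at this
  have hSB : S * M * S = B := by
    rw [hMdef]
    rw [show S * (S⁻¹ * B * S⁻¹) * S = S * S⁻¹ * B * (S⁻¹ * S) by
      simp only [Matrix.mul_assoc]]
    rw [hSinv, hSinv', one_mul, mul_one]
  have hkey : t • A + (1 - t) • B
      = S * (t • (1 : Matrix (Fin n) (Fin n) ℝ) + (1 - t) • M) * S := by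
    rw [Matrix.mul_add, Matrix.add_mul, Matrix.mul_smul, Matrix.mul_smul,
      Matrix.smul_mul, Matrix.smul_mul, mul_one, hSS, hSB]
  have hdetkey : (t • A + (1 - t) • B).det
      = A.det * (t • (1 : Matrix (Fin n) (Fin n) ℝ) + (1 - t) • M).det := by
    rw [hkey, Matrix.det_mul, Matrix.det_mul, ← hdetS]
    ring
  have hdetB : B.det = A.det * M.det := by
    rw [← hSB, Matrix.det_mul, Matrix.det_mul, ← hdetS]
    ring
  have hcore := core hMpd h0 h1
  have ha : 0 < (A.det)⁻¹ := inv_pos.mpr hdetA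
  have hPD : (t • (1 : Matrix (Fin n) (Fin n) ℝ) + (1 - t) • M).PosDef := by
    refine posDef_iff_dotProduct_mulVec.mpr ⟨?_, fun x hx => ?_⟩
    · have hMt : Mᵀ = M := by simpa using hMpd.1.eq
      simp [Matrix.IsHermitian, Matrix.conjTranspose_smul, hMt]
    · have h5 := hMpd.dotProduct_mulVec_pos hx
      have h6 : (0:ℝ) ≤ star x ⬝ᵥ x := dotProduct_star_self_nonneg x
      rw [Matrix.add_mulVec, Matrix.smul_mulVec, Matrix.smul_mulVec,
        Matrix.one_mulVec, dotProduct_add, dotProduct_smul,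
        dotProduct_smul]
      have h7 : 0 < (1 - t) * (star x ⬝ᵥ M *ᵥ x) := mul_pos (by linarith) h5
      have h8 : 0 ≤ t * (star x ⬝ᵥ x) := mul_nonneg h0 h6
      simpa [smul_eq_mul] using add_pos_of_nonneg_of_pos h8 h7
  have hP : 0 < (t • (1 : Matrix (Fin n) (Fin n) ℝ) + (1 - t) • M).det := hPD.det_pos
  rw [hdetkey, hdetB, mul_inv, mul_inv]
  nlinarith [mul_le_mul_of_nonneg_left hcore ha.le, inv_pos.mpr hMpd.det_pos]
end

section
/- Let A be a symmetric positive definite n×n matrix with d = det A, let B be a symmetric positive semidefinite n×n matrix, and let a ≥ 0. Then a · det(B) · d^(n-1) ≤ ((a + d · tr(A⁻¹B)) / (n+1))^(n+1). -/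
open Finset Matrix

/-- AM-GM: product of m nonneg reals ≤ (sum/m)^m. -/
lemma amgm_aux_s5 (m : ℕ) (hm : 0 < m) (z : Fin m → ℝ) (hz : ∀ i, 0 ≤ z i) :
    ∏ i, z i ≤ ((∑ i, z i) / m) ^ m := by
  have hm' : (0:ℝ) < m := by exact_mod_cast hm
  have hgeo := Real.geom_mean_le_arith_mean_weighted Finset.univ (fun _ => 1 / (m:ℝ)) z
    (fun i _ => by positivity)
    (by simp [Finset.sum_const, Finset.card_univ]; field_simp)
    (fun i _ => hz i)
  have h1 : ∏ i, z i ^ ((1:ℝ)/m) = (∏ i, z i) ^ ((1:ℝ)/m) := by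
    rw [← Real.finset_prod_rpow _ _ (fun i _ => hz i)]
  have h2 : ∑ i, (1/(m:ℝ)) * z i = (∑ i, z i) / m := by
    rw [← Finset.mul_sum]; ring
  rw [h1, h2] at hgeo
  have hprod : (0:ℝ) ≤ ∏ i, z i := Finset.prod_nonneg (fun i _ => hz i)
  calc ∏ i, z i = ((∏ i, z i) ^ ((1:ℝ)/m)) ^ (m:ℕ) := by
        rw [← Real.rpow_natCast ((∏ i, z i) ^ ((1:ℝ)/m)) m, ← Real.rpow_mul hprod]
        rw [one_div, inv_mul_cancel₀ (ne_of_gt hm'), Real.rpow_one]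
    _ ≤ ((∑ i, z i) / m) ^ m := pow_le_pow_left₀ (Real.rpow_nonneg hprod _) hgeo m

lemma trace_eq_sum_eigenvalues {m : ℕ} {M : Matrix (Fin m) (Fin m) ℝ}
    (hM : M.IsHermitian) : M.trace = ∑ i, hM.eigenvalues i := by
  conv_lhs => rw [hM.spectral_theorem, Unitary.conjStarAlgAut_apply]
  rw [Matrix.trace_mul_comm, ← mul_assoc]
  have : (star (Matrix.IsHermitian.eigenvectorUnitary hM : Matrix (Fin m) (Fin m) ℝ)) *
      (Matrix.IsHermitian.eigenvectorUnitary hM : Matrix (Fin m) (Fin m) ℝ) = 1 := by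
    exact_mod_cast Unitary.coe_star_mul_self (Matrix.IsHermitian.eigenvectorUnitary hM)
  rw [this, one_mul, Matrix.trace_diagonal]
  simp [RCLike.ofReal]

/-- AM–GM step of the parabolic ABP argument:
    a · det B · d^(n-1) ≤ ((a + d · tr(A⁻¹B)) / (n+1))^(n+1), d = det A. -/
theorem abp_amgm_step (n : ℕ) (hn : 1 ≤ n)
    (A B : Matrix (Fin n) (Fin n) ℝ) (hA : A.PosDef) (hB : B.PosSemidef)
    (a : ℝ) (ha : 0 ≤ a) :
    a * B.det * A.det ^ (n - 1) ≤
      ((a + A.det * (A⁻¹ * B).trace) / (n + 1)) ^ (n + 1) := by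
  set d := A.det with hd_def
  have hd : 0 < d := hA.det_pos
  have hAinv : (A⁻¹).PosDef := hA.inv
  open scoped MatrixOrder in set S := CFC.sqrt A⁻¹ with hS_def
  have hSS : S * S = A⁻¹ := by open scoped MatrixOrder in exact CFC.sqrt_mul_sqrt_self _ hAinv.posSemidef.nonneg
  have hSH : S.IsHermitian := by open scoped MatrixOrder in exact (CFC.sqrt_nonneg _).posSemidef.1
  have hM : (S * B * S).PosSemidef := by
    have := hB.mul_mul_conjTranspose_same S
    rwa [hSH.eq] at this
  set μ := hM.1.eigenvalues with hμ_def
  have hμ0 : ∀ i, 0 ≤ μ i := hM.eigenvalues_nonneg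
  -- det and trace of S B S
  have hdetM : (S * B * S).det = d⁻¹ * B.det := by
    rw [Matrix.det_mul, Matrix.det_mul, mul_comm S.det B.det, mul_assoc, ← Matrix.det_mul, hSS,
      Matrix.det_nonsing_inv, ← hd_def, Ring.inverse_eq_inv']
    ring
  have htrM : (S * B * S).trace = (A⁻¹ * B).trace := by
    rw [Matrix.trace_mul_comm, ← mul_assoc, hSS]
  have hdetμ : (S * B * S).det = ∏ i, μ i := by
    simpa using hM.1.det_eq_prod_eigenvalues
  have htrμ : (S * B * S).trace = ∑ i, μ i := trace_eq_sum_eigenvalues hM.1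
  -- set up vector for AM-GM
  set z : Fin (n+1) → ℝ := Fin.cons a (fun i => d * μ i) with hz_def
  have hz0 : ∀ i, 0 ≤ z i := by
    intro i
    refine Fin.cases ?_ ?_ i
    · simpa [hz_def] using ha
    · intro j; simp only [hz_def, Fin.cons_succ]; exact mul_nonneg hd.le (hμ0 j)
  have key := amgm_aux_s5 (n+1) (Nat.succ_pos n) z hz0
  have hprod : ∏ i, z i = a * B.det * d ^ (n - 1) := by
    rw [hz_def, Fin.prod_cons, Finset.prod_mul_distrib, Finset.prod_const, Finset.card_univ,
      Fintype.card_fin, ← hdetμ, hdetM]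
    have : d ^ n = d ^ (n - 1) * d := by
      conv_lhs => rw [← Nat.sub_add_cancel hn]
      rw [pow_succ]
    rw [this]
    field_simp
  have hsum : ∑ i, z i = a + d * (A⁻¹ * B).trace := by
    rw [hz_def, Fin.sum_cons, ← Finset.mul_sum, ← htrμ, htrM]
  rw [hprod, hsum] at key
  convert key using 3
  push_cast
  ring
end
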